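/- arXiv:2003.14394 — 3 statements merged into one kernel-verified Lean document; each statement's English description precedes it below -/
import Mathlib

section
/- Let G = (V,E) be an unweighted graph on n qubits and let λ_max^Z(G) denote the maximum eigenvalue of H^Z(G) = −(1/2)∑_{{i,j}∈E} Z_iZ_j. Then the maximum eigenvalue of the quantum Max Cut Hamiltonian satisfies ‖H_G‖ ≤ |E|/2 + 3·λ_max^Z(G). -/
open Matrix Finset
noncomputable section

/-- Pauli `X` matrix. -/
def PX : Matrix (Fin 2) (Fin 2) ℂ := !![0, 1; 1, 0]
/-- Pauli `Y` matrix. -/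
def PY : Matrix (Fin 2) (Fin 2) ℂ := !![0, -Complex.I; Complex.I, 0]
/-- Pauli `Z` matrix. -/
def PZ : Matrix (Fin 2) (Fin 2) ℂ := !![1, 0; 0, -1]

/-- The one-qubit operator `P` acting on qubit `i` of an `n`-qubit system
(tensored with the identity on all other qubits), written as a matrix in the
computational basis `Fin n → Fin 2` of `(ℂ²)^{⊗n}`. -/
def pauliAt (n : ℕ) (i : Fin n) (P : Matrix (Fin 2) (Fin 2) ℂ) :
    Matrix (Fin n → Fin 2) (Fin n → Fin 2) ℂ :=
  fun x y => P (x i) (y i) * ∏ k ∈ Finset.univ.erase i, (if x k = y k then (1 : ℂ) else 0)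

/-- The quantum Max Cut interaction term
`h_{ij} = (1/2)(I - X_i X_j - Y_i Y_j - Z_i Z_j)`. -/
def hTerm (n : ℕ) (i j : Fin n) : Matrix (Fin n → Fin 2) (Fin n → Fin 2) ℂ :=
  (1 / 2 : ℂ) • (1 - pauliAt n i PX * pauliAt n j PX - pauliAt n i PY * pauliAt n j PY
      - pauliAt n i PZ * pauliAt n j PZ)

/-- The quantum Max Cut Hamiltonian `H_G = ∑_{{i,j} ∈ E} w_{ij} h_{ij}` of a weighted
graph `G` (with a symmetric weight function `w`).  The double sum ranges over ordered
pairs and hence counts every edge twice, whence the factor `1/2`. -/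
def hamG (n : ℕ) (G : SimpleGraph (Fin n)) [DecidableRel G.Adj] (w : Fin n → Fin n → ℝ) :
    Matrix (Fin n → Fin 2) (Fin n → Fin 2) ℂ :=
  (1 / 2 : ℂ) • ∑ i, ∑ j, if G.Adj i j then (w i j : ℂ) • hTerm n i j else 0

/-- The energy `⟨ψ|A|ψ⟩` of a (unit) vector `ψ`; for Hermitian `A` this is real, and we
take the real part. -/
def energy {m : Type} [Fintype m] (A : Matrix m m ℂ) (ψ : m → ℂ) : ℝ :=
  (star ψ ⬝ᵥ A *ᵥ ψ).re

/-- The maximum eigenvalue of a Hermitian matrix `A`, expressed as the supremum of the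
energy `⟨ψ|A|ψ⟩` over unit vectors `ψ`. -/
def maxEig {m : Type} [Fintype m] (A : Matrix m m ℂ) : ℝ :=
  sSup { r | ∃ ψ : m → ℂ, ∑ x, ‖ψ x‖ ^ 2 = 1 ∧ r = energy A ψ }

/-- The total edge weight `W = ∑_{e ∈ E} w_e` (the double sum counts every edge twice). -/
def totalW (n : ℕ) (G : SimpleGraph (Fin n)) [DecidableRel G.Adj] (w : Fin n → Fin n → ℝ) : ℝ :=
  (1 / 2 : ℝ) * ∑ i, ∑ j, if G.Adj i j then w i j else 0

/-- `max_{e ∈ E} w_e`: the largest edge weight of the graph (`0` if there are no edges;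
for nonnegative weights this agrees with the maximum over the edge set). -/
def maxEdgeW (n : ℕ) (G : SimpleGraph (Fin n)) [DecidableRel G.Adj]
    (w : Fin n → Fin n → ℝ) : ℝ :=
  (Finset.univ : Finset (Fin n × Fin n)).fold max 0
    fun p => if G.Adj p.1 p.2 then w p.1 p.2 else 0

/-- `max_{e ∋ v} w_e`: the largest weight of an edge incident to the vertex `v`
(taken to be `0` for an isolated vertex). -/
def maxIncident (n : ℕ) (G : SimpleGraph (Fin n)) [DecidableRel G.Adj]
    (w : Fin n → Fin n → ℝ) (v : Fin n) : ℝ :=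
  (Finset.univ.filter fun j => G.Adj v j).fold max 0 (w v)

/-- `OPT(G) = ‖H_G‖`, the maximum eigenvalue of the (positive semidefinite)
Hamiltonian `H_G`. -/
def OPTval (n : ℕ) (G : SimpleGraph (Fin n)) [DecidableRel G.Adj]
    (w : Fin n → Fin n → ℝ) : ℝ :=
  maxEig (hamG n G w)

/-- `PROD(G)`: the supremum of `⟨φ|H_G|φ⟩` over product states
`φ = φ_1 ⊗ φ_2 ⊗ ⋯ ⊗ φ_n`, each `φ_i` a normalized single-qubit state. -/
def PRODval (n : ℕ) (G : SimpleGraph (Fin n)) [DecidableRel G.Adj]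
    (w : Fin n → Fin n → ℝ) : ℝ :=
  sSup { r | ∃ f : Fin n → Fin 2 → ℂ, (∀ i, ∑ b, ‖f i b‖ ^ 2 = 1) ∧
    r = energy (hamG n G w) (fun x => ∏ i, f i (x i)) }

/-- The computational basis state `|z⟩`, as a vector in `(ℂ²)^{⊗n}`. -/
def basisVec (n : ℕ) (z : Fin n → Fin 2) : (Fin n → Fin 2) → ℂ :=
  fun x => if x = z then 1 else 0

/-- The Hamiltonian `H^P(G) = -(1/2) ∑_{{i,j} ∈ E} P_i P_j` for a single Pauli matrix `P`
(the double sum over ordered pairs counts every edge twice, whence the factor `-(1/4)`). -/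
def hamPauli (n : ℕ) (G : SimpleGraph (Fin n)) [DecidableRel G.Adj]
    (P : Matrix (Fin 2) (Fin 2) ℂ) : Matrix (Fin n → Fin 2) (Fin n → Fin 2) ℂ :=
  (-(1 / 4) : ℂ) • ∑ i, ∑ j, if G.Adj i j then pauliAt n i P * pauliAt n j P else 0

/-! For an unweighted graph the identity parts of the terms `h_{ij}` add up to `|E|/2`, so
`H_G = |E|/2 + H^X + H^Y + H^Z`. The product unitaries `H^{⊗n}` (Hadamard) and `S^{⊗n}` (phase
gate) conjugate `H^Z` into `H^X` and `H^X` into `H^Y`, so neither has a larger top eigenvalue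
than `H^Z`; the top eigenvalue is subadditive. -/

section MaxEig

variable {m : Type} [Fintype m]

lemma star_dotProduct_self (ψ : m → ℂ) :
    star ψ ⬝ᵥ ψ = ((∑ x, ‖ψ x‖ ^ 2 : ℝ) : ℂ) := by
  push_cast
  exact Finset.sum_congr rfl fun x _ => Complex.conj_mul' (ψ x)

lemma energy_add (A B : Matrix m m ℂ) (ψ : m → ℂ) :
    energy (A + B) ψ = energy A ψ + energy B ψ := by
  simp [energy, add_mulVec, dotProduct_add]

lemma energy_smul_one [DecidableEq m] (r : ℝ) {ψ : m → ℂ} (hψ : ∑ x, ‖ψ x‖ ^ 2 = 1) :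
    energy ((r : ℂ) • (1 : Matrix m m ℂ)) ψ = r := by
  simp [energy, smul_mulVec, dotProduct_smul, star_dotProduct_self, hψ]

lemma energy_conj (V A : Matrix m m ℂ) (ψ : m → ℂ) :
    energy (V * A * Vᴴ) ψ = energy A (Vᴴ *ᵥ ψ) := by
  unfold energy
  rw [star_mulVec, conjTranspose_conjTranspose, mulVec_mulVec, dotProduct_mulVec,
    dotProduct_mulVec, vecMul_vecMul, Matrix.mul_assoc]

lemma sum_norm_sq_conjTranspose_mulVec [DecidableEq m] {V : Matrix m m ℂ} (hV : V * Vᴴ = 1)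
    (ψ : m → ℂ) : ∑ x, ‖(Vᴴ *ᵥ ψ) x‖ ^ 2 = ∑ x, ‖ψ x‖ ^ 2 := by
  have h : star (Vᴴ *ᵥ ψ) ⬝ᵥ (Vᴴ *ᵥ ψ) = star ψ ⬝ᵥ ψ := by
    rw [star_mulVec, conjTranspose_conjTranspose, dotProduct_mulVec, vecMul_vecMul, hV,
      vecMul_one]
  rw [star_dotProduct_self, star_dotProduct_self] at h
  exact_mod_cast h

lemma energy_le_sum_norm (A : Matrix m m ℂ) {ψ : m → ℂ} (hψ : ∑ x, ‖ψ x‖ ^ 2 = 1) :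
    energy A ψ ≤ ∑ x, ∑ y, ‖A x y‖ := by
  have hle : ∀ x, ‖ψ x‖ ≤ 1 := fun x => by
    refine (sq_le_one_iff₀ (norm_nonneg _)).mp ?_
    exact hψ ▸ Finset.single_le_sum (fun a _ => sq_nonneg ‖ψ a‖) (Finset.mem_univ x)
  calc energy A ψ ≤ ‖star ψ ⬝ᵥ A *ᵥ ψ‖ := Complex.re_le_norm _
    _ ≤ ∑ x, ‖ψ x‖ * ∑ y, ‖A x y‖ * ‖ψ y‖ := by
        refine (norm_sum_le _ _).trans (Finset.sum_le_sum fun x _ => ?_)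
        rw [Pi.star_apply, norm_mul, norm_star]
        gcongr
        exact (norm_sum_le _ _).trans_eq (by simp only [norm_mul])
    _ ≤ ∑ x, 1 * ∑ y, ‖A x y‖ * 1 := by
        gcongr with x _ y _ <;> exact hle _
    _ = ∑ x, ∑ y, ‖A x y‖ := by simp

lemma energy_le_maxEig (A : Matrix m m ℂ) {ψ : m → ℂ} (hψ : ∑ x, ‖ψ x‖ ^ 2 = 1) :
    energy A ψ ≤ maxEig A :=
  le_csSup ⟨_, fun _ ⟨_, hφ, hr⟩ => hr ▸ energy_le_sum_norm A hφ⟩ ⟨ψ, hψ, rfl⟩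

variable [Nonempty m] [DecidableEq m]

lemma maxEig_le {A : Matrix m m ℂ} {c : ℝ}
    (h : ∀ ψ : m → ℂ, ∑ x, ‖ψ x‖ ^ 2 = 1 → energy A ψ ≤ c) : maxEig A ≤ c := by
  refine csSup_le ?_ fun _ ⟨ψ, hψ, hr⟩ => hr ▸ h ψ hψ
  obtain ⟨x₀⟩ := ‹Nonempty m›
  refine ⟨_, Pi.single x₀ 1, ?_, rfl⟩
  rw [Finset.sum_eq_single x₀ (fun x _ hx => by simp [hx]) (by simp)]
  simp

lemma maxEig_add_le (A B : Matrix m m ℂ) : maxEig (A + B) ≤ maxEig A + maxEig B :=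
  maxEig_le fun _ hψ => (energy_add A B _).trans_le <|
    add_le_add (energy_le_maxEig A hψ) (energy_le_maxEig B hψ)

lemma maxEig_smul_one_le (r : ℝ) : maxEig ((r : ℂ) • (1 : Matrix m m ℂ)) ≤ r :=
  maxEig_le fun _ hψ => (energy_smul_one r hψ).le

lemma maxEig_conj_le {V : Matrix m m ℂ} (hV : V * Vᴴ = 1) (A : Matrix m m ℂ) :
    maxEig (V * A * Vᴴ) ≤ maxEig A :=
  maxEig_le fun ψ hψ => energy_conj V A ψ ▸
    energy_le_maxEig A ((sum_norm_sq_conjTranspose_mulVec hV ψ).trans hψ)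

end MaxEig

section PiKron

variable {ι d R : Type*} [Fintype ι] [CommSemiring R]

def piKron (M : ι → Matrix d d R) : Matrix (ι → d) (ι → d) R :=
  fun x y => ∏ i, M i (x i) (y i)

lemma conjTranspose_piKron [StarRing R] (M : ι → Matrix d d R) :
    (piKron M)ᴴ = piKron fun i => (M i)ᴴ := by
  ext x y
  simp [piKron, conjTranspose_apply]

lemma piKron_one [DecidableEq d] : piKron (fun _ : ι => (1 : Matrix d d R)) = 1 := by
  ext x y
  by_cases h : x = y
  · subst h; simp [piKron]
  · obtain ⟨k, hk⟩ := Function.ne_iff.mp h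
    rw [one_apply_ne h]
    exact Finset.prod_eq_zero (Finset.mem_univ k) (one_apply_ne hk)

variable [DecidableEq ι] [Fintype d]

lemma piKron_mul (M N : ι → Matrix d d R) :
    piKron M * piKron N = piKron fun i => M i * N i := by
  ext x y
  simp only [piKron, mul_apply, Finset.prod_univ_sum, Fintype.piFinset_univ,
    ← Finset.prod_mul_distrib]

lemma piKron_const_mul_conjTranspose [DecidableEq d] [StarRing R] {U : Matrix d d R}
    (hU : U * Uᴴ = 1) : piKron (fun _ : ι => U) * (piKron fun _ : ι => U)ᴴ = 1 := by
  simp only [conjTranspose_piKron, piKron_mul, hU, piKron_one]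

end PiKron

lemma pauliAt_eq_piKron (n : ℕ) (i : Fin n) (P : Matrix (Fin 2) (Fin 2) ℂ) :
    pauliAt n i P = piKron (Function.update 1 i P) := by
  ext x y
  rw [piKron, pauliAt, ← Finset.mul_prod_erase _ _ (Finset.mem_univ i)]
  congr 1
  · simp
  · refine Finset.prod_congr rfl fun k hk => ?_
    simp [Function.update_of_ne (Finset.ne_of_mem_erase hk), one_apply]

lemma conj_pauliAt {n : ℕ} {U : Matrix (Fin 2) (Fin 2) ℂ} (hU : U * Uᴴ = 1) (i : Fin n)
    (P : Matrix (Fin 2) (Fin 2) ℂ) :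
    piKron (fun _ => U) * pauliAt n i P * (piKron fun _ => U)ᴴ = pauliAt n i (U * P * Uᴴ) := by
  rw [pauliAt_eq_piKron, pauliAt_eq_piKron, conjTranspose_piKron, piKron_mul, piKron_mul]
  congr 1
  ext1 k
  rcases eq_or_ne k i with rfl | hk
  · simp
  · simp [Function.update_of_ne hk, hU]

lemma conj_hamPauli {n : ℕ} (G : SimpleGraph (Fin n)) [DecidableRel G.Adj]
    {U : Matrix (Fin 2) (Fin 2) ℂ} (hU : U * Uᴴ = 1) (P : Matrix (Fin 2) (Fin 2) ℂ) :
    piKron (fun _ => U) * hamPauli n G P * (piKron fun _ => U)ᴴ =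
      hamPauli n G (U * P * Uᴴ) := by
  let V : unitary (Matrix (Fin n → Fin 2) (Fin n → Fin 2) ℂ) :=
    ⟨_, mem_unitaryGroup_iff.2 (piKron_const_mul_conjTranspose hU)⟩
  change Unitary.conjStarAlgAut ℂ _ V (hamPauli n G P) = _
  simp only [hamPauli, map_smul, map_sum, apply_ite (Unitary.conjStarAlgAut ℂ _ V), map_mul,
    map_zero, Unitary.conjStarAlgAut_apply]
  simp only [V, star_eq_conjTranspose, conj_pauliAt hU]

def hadamardGate : Matrix (Fin 2) (Fin 2) ℂ := ((√2 : ℝ) : ℂ)⁻¹ • !![1, 1; 1, -1]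

def phaseGate : Matrix (Fin 2) (Fin 2) ℂ := !![1, 0; 0, Complex.I]

lemma inv_sqrt_two_mul_self : ((√2 : ℝ) : ℂ)⁻¹ * ((√2 : ℝ) : ℂ)⁻¹ = 1 / 2 := by
  rw [← mul_inv, ← Complex.ofReal_mul, Real.mul_self_sqrt zero_le_two]
  norm_num

lemma hadamardGate_mul_conjTranspose : hadamardGate * hadamardGateᴴ = 1 := by
  ext i j
  fin_cases i <;> fin_cases j <;>
    simp [hadamardGate, mul_apply, conjTranspose_apply, inv_sqrt_two_mul_self] <;> norm_num

lemma hadamardGate_conj_PZ : hadamardGate * PZ * hadamardGateᴴ = PX := by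
  ext i j
  fin_cases i <;> fin_cases j <;>
    simp [hadamardGate, PZ, PX, mul_apply, conjTranspose_apply, inv_sqrt_two_mul_self] <;> norm_num

lemma phaseGate_mul_conjTranspose : phaseGate * phaseGateᴴ = 1 := by
  ext i j
  fin_cases i <;> fin_cases j <;> simp [phaseGate, mul_apply, conjTranspose_apply]

lemma phaseGate_conj_PX : phaseGate * PX * phaseGateᴴ = PY := by
  ext i j
  fin_cases i <;> fin_cases j <;> simp [phaseGate, PX, PY, mul_apply, conjTranspose_apply]

section QuantumMaxCut

variable {n : ℕ} (G : SimpleGraph (Fin n)) [DecidableRel G.Adj]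

lemma maxEig_hamPauli_conj_le {U : Matrix (Fin 2) (Fin 2) ℂ} (hU : U * Uᴴ = 1)
    (P : Matrix (Fin 2) (Fin 2) ℂ) :
    maxEig (hamPauli n G (U * P * Uᴴ)) ≤ maxEig (hamPauli n G P) :=
  conj_hamPauli G hU P ▸ maxEig_conj_le (piKron_const_mul_conjTranspose hU) _

lemma maxEig_hamPauli_PX_le : maxEig (hamPauli n G PX) ≤ maxEig (hamPauli n G PZ) :=
  hadamardGate_conj_PZ ▸ maxEig_hamPauli_conj_le G hadamardGate_mul_conjTranspose PZ

lemma maxEig_hamPauli_PY_le : maxEig (hamPauli n G PY) ≤ maxEig (hamPauli n G PZ) :=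
  (phaseGate_conj_PX ▸ maxEig_hamPauli_conj_le G phaseGate_mul_conjTranspose PX).trans
    (maxEig_hamPauli_PX_le G)

lemma sum_sum_ite_adj_one :
    (∑ i, ∑ j, if G.Adj i j then (1 : ℂ) else 0) = 2 * G.edgeFinset.card := by
  simp only [Finset.sum_boole, ← SimpleGraph.neighborFinset_eq_filter,
    SimpleGraph.card_neighborFinset_eq_degree]
  exact_mod_cast G.sum_degrees_eq_twice_card_edges

lemma hamG_one_eq :
    hamG n G (fun _ _ => 1) = (((G.edgeFinset.card : ℝ) / 2 : ℝ) : ℂ) • 1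
      + hamPauli n G PX + hamPauli n G PY + hamPauli n G PZ := by
  have hterm : ∀ i j, (if G.Adj i j then ((1 : ℝ) : ℂ) • hTerm n i j else 0) =
      (1 / 2 : ℂ) • ((if G.Adj i j then (1 : ℂ) else 0) • 1
        - (if G.Adj i j then pauliAt n i PX * pauliAt n j PX else 0)
        - (if G.Adj i j then pauliAt n i PY * pauliAt n j PY else 0)
        - (if G.Adj i j then pauliAt n i PZ * pauliAt n j PZ else 0)) := by
    intro i j
    split_ifs <;> simp [hTerm]
  simp only [hamG, hamPauli, hterm, ← Finset.smul_sum, Finset.sum_sub_distrib,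
    ← Finset.sum_smul, sum_sum_ite_adj_one, smul_smul]
  push_cast
  module

end QuantumMaxCut

/-- For an unweighted graph `G` on `n` qubits,
`‖H_G‖ ≤ |E|/2 + 3 λ_max^Z(G)`, where `λ_max^Z(G)` is the maximum eigenvalue of
`H^Z(G) = -(1/2)∑_{{i,j}∈E} Z_iZ_j`. -/
theorem maxEig_hamG_le_half_edges_add_three_lambdaZ (n : ℕ) (G : SimpleGraph (Fin n))
    [DecidableRel G.Adj] :
    maxEig (hamG n G fun _ _ => 1) ≤
      (G.edgeFinset.card : ℝ) / 2 + 3 * maxEig (hamPauli n G PZ) := by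
  set c : ℂ := (((G.edgeFinset.card : ℝ) / 2 : ℝ) : ℂ)
  have hc : maxEig (c • 1 : Matrix (Fin n → Fin 2) (Fin n → Fin 2) ℂ) ≤ _ :=
    maxEig_smul_one_le _
  have hX := maxEig_hamPauli_PX_le G
  have hY := maxEig_hamPauli_PY_le G
  rw [hamG_one_eq]
  linarith [maxEig_add_le (c • 1 + hamPauli n G PX + hamPauli n G PY) (hamPauli n G PZ),
    maxEig_add_le (c • 1 + hamPauli n G PX) (hamPauli n G PY),
    maxEig_add_le (c • 1) (hamPauli n G PX)]
end
end

section
/- Let G = (V,E,w) be a weighted graph with nonnegative edge weights. Then there exist edge subsets M, F ⊆ E such that M is a matching (no two edges of M share a vertex), F is a forest (the subgraph (V,F) contains no cycle), and ∑_{v∈V} max_{e incident to v} w_e = ∑_{e∈M} w_e + ∑_{e∈F} w_e, where the max over incident edges of an isolated vertex is taken to be 0. -/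
open Matrix Finset
noncomputable section

/-!
Every non-isolated vertex picks its heaviest incident edge, ties being broken by a fixed
enumeration of the edges so that all comparisons are strict. Then `∑_v max_{e ∋ v} w_e` is the
sum of the picked edges counted with multiplicity: an edge is picked once, or twice when both
endpoints pick it, and the doubly picked edges form a matching since every vertex picks only one
edge. The picked edges form a forest: the lightest edge of a cycle is not the heaviest edge at
either of its endpoints, each of which lies on a second, heavier edge of the cycle.
-/

namespace SimpleGraph

variable {V : Type*}

theorem Walk.IsCycle.exists_ne_of_mem_support {G : SimpleGraph V} {u v : V} {c : G.Walk u u}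
    (hc : c.IsCycle) (hv : v ∈ c.support) :
    ∃ x y, x ≠ y ∧ s(v, x) ∈ c.edges ∧ s(v, y) ∈ c.edges := by
  obtain ⟨x, y, hxy, hN⟩ := Set.ncard_eq_two.mp (hc.ncard_neighborSet_toSubgraph_eq_two hv)
  have hmem : ∀ z ∈ c.toSubgraph.neighborSet v, s(v, z) ∈ c.edges := fun _ hz =>
    Walk.adj_toSubgraph_iff_mem_edges.mp hz
  exact ⟨x, y, hxy, hmem x (by simp [hN]), hmem y (by simp [hN])⟩

theorem isAcyclic_fromEdgeSet_of_forall_exists_mem_forall_le {α : Type*} [LinearOrder α]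
    {F : Set (Sym2 V)} {r : Sym2 V → α} (hr : Function.Injective r)
    (hF : ∀ e ∈ F, ∃ v ∈ e, ∀ e' ∈ F, v ∈ e' → r e' ≤ r e) :
    (fromEdgeSet F).IsAcyclic := by
  classical
  intro u c hc
  have hcF : ∀ e ∈ c.edges, e ∈ F := fun e he =>
    (edgeSet_fromEdgeSet F ▸ c.edges_subset_edgeSet he).1
  have hne : c.edges.toFinset.Nonempty := by
    rw [List.toFinset_nonempty_iff, ← List.length_pos_iff, c.length_edges]
    linarith [hc.three_le_length]
  obtain ⟨e, he, hmin⟩ := c.edges.toFinset.exists_min_image r hne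
  rw [List.mem_toFinset] at he
  obtain ⟨v, hve, hmax⟩ := hF e (hcF e he)
  obtain ⟨z, rfl⟩ := Sym2.mem_iff_exists.mp hve
  obtain ⟨x, y, hxy, hx, hy⟩ := hc.exists_ne_of_mem_support (c.fst_mem_support_of_mem_edges he)
  have hcollapse : ∀ t, s(v, t) ∈ c.edges → s(v, t) = s(v, z) := fun t ht =>
    hr (le_antisymm (hmax _ (hcF _ ht) (Sym2.mem_mk_left _ _))
      (hmin _ (List.mem_toFinset.mpr ht)))
  exact hxy (Sym2.congr_right.mp ((hcollapse x hx).trans (hcollapse y hy).symm))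

end SimpleGraph

theorem Finset.fold_max_eq_of_mem_of_forall_le {ι α : Type*} [LinearOrder α] {s : Finset ι}
    {g : ι → α} {b : α} {i : ι} (hi : i ∈ s) (hb : b ≤ g i) (hmax : ∀ j ∈ s, g j ≤ g i) :
    s.fold max b g = g i :=
  le_antisymm ((fold_max_le _).mpr ⟨hb, hmax⟩) ((le_fold_max _).mpr (Or.inr ⟨i, hi, le_rfl⟩))

open Classical in
theorem Finset.sum_comp_sym2_eq_sum_image_add_sum_filter {V M : Type*} [DecidableEq V]
    [AddCommMonoid M] (S : Finset V) (c : V → Sym2 V) (hc : ∀ v ∈ S, v ∈ c v ∧ ¬(c v).IsDiag)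
    (f : Sym2 V → M) :
    ∑ v ∈ S, f (c v) =
      ∑ e ∈ S.image c, f e + ∑ e ∈ S.image c with ∀ v ∈ e, v ∈ S ∧ c v = e, f e := by
  rw [sum_comp, sum_filter, ← sum_add_distrib]
  refine sum_congr rfl fun e he => ?_
  obtain ⟨v₀, hv₀, rfl⟩ := mem_image.mp he
  obtain ⟨hv₀c, hdiag⟩ := hc v₀ hv₀
  generalize hce : c v₀ = e at hv₀c hdiag
  induction e using Sym2.inductionOn with
  | _ x y =>
  have hxy : x ≠ y := fun h => hdiag (Sym2.mk_isDiag_iff.mpr h)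
  have hfiber : #{v ∈ S | c v = s(x, y)} = #{v ∈ {x, y} | v ∈ S ∧ c v = s(x, y)} := by
    congr 1
    ext v
    simp only [mem_filter, mem_insert, mem_singleton]
    refine ⟨fun ⟨hvS, hcv⟩ => ⟨?_, hvS, hcv⟩, fun h => h.2⟩
    simpa [hcv] using (hc v hvS).1
  rw [hfiber, card_filter, sum_pair hxy, Sym2.forall_mem_pair]
  have hchosen : (x ∈ S ∧ c x = s(x, y)) ∨ (y ∈ S ∧ c y = s(x, y)) := by
    rcases Sym2.mem_iff.mp hv₀c with rfl | rfl
    exacts [.inl ⟨hv₀, hce⟩, .inr ⟨hv₀, hce⟩]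
  split_ifs <;> simp_all [two_nsmul]

namespace SimpleGraph

variable {V α : Type*} [Fintype V] [DecidableEq V] [AddCommMonoid α] [LinearOrder α]

theorem exists_matching_forest_sum_fold_max_eq (G : SimpleGraph V) [DecidableRel G.Adj]
    (f : Sym2 V → α) (hf : ∀ e, 0 ≤ f e) :
    ∃ M F : Finset (Sym2 V), ↑M ⊆ G.edgeSet ∧ ↑F ⊆ G.edgeSet ∧
      (∀ e ∈ M, ∀ e' ∈ M, e ≠ e' → ∀ v : V, v ∈ e → v ∉ e') ∧
      (fromEdgeSet (↑F : Set (Sym2 V))).IsAcyclic ∧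
      ∑ v, (G.neighborFinset v).fold max 0 (fun j => f s(v, j)) =
        ∑ e ∈ M, f e + ∑ e ∈ F, f e := by
  classical
  let r : Sym2 V → α ×ₗ Fin (Fintype.card (Sym2 V)) := fun e =>
    toLex (f e, Fintype.equivFin _ e)
  have hr : Function.Injective r := fun e e' h =>
    (Fintype.equivFin _).injective (Prod.ext_iff.mp (toLex_inj.mp h)).2
  let S : Finset V := {v | (G.neighborFinset v).Nonempty}
  have hbest : ∀ v, ∃ j, v ∈ S →
      j ∈ G.neighborFinset v ∧ ∀ i ∈ G.neighborFinset v, r s(v, i) ≤ r s(v, j) := fun v => by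
    by_cases hv : (G.neighborFinset v).Nonempty
    · obtain ⟨j, hj, hmax⟩ := (G.neighborFinset v).exists_max_image (fun j => r s(v, j)) hv
      exact ⟨j, fun _ => ⟨hj, hmax⟩⟩
    · exact ⟨v, fun hvS => absurd (mem_filter.mp hvS).2 hv⟩
  choose best hbest using hbest
  let c : V → Sym2 V := fun v => s(v, best v)
  have hcG : ∀ v ∈ S, c v ∈ G.edgeSet := fun v hv => by
    simpa [c] using (hbest v hv).1
  let F : Finset (Sym2 V) := S.image c
  let M : Finset (Sym2 V) := {e ∈ F | ∀ v ∈ e, v ∈ S ∧ c v = e}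
  have hFG : ↑F ⊆ G.edgeSet := by
    rintro _ he
    obtain ⟨v, hv, rfl⟩ := mem_image.mp he
    exact hcG v hv
  refine ⟨M, F, fun e he => hFG (mem_filter.mp he).1, hFG, ?matching, ?acyclic, ?sum⟩
  case matching =>
    intro e he e' he' hne v hv hv'
    exact hne (((mem_filter.mp he).2 v hv).2.symm.trans ((mem_filter.mp he').2 v hv').2)
  case acyclic =>
    refine isAcyclic_fromEdgeSet_of_forall_exists_mem_forall_le hr fun e he => ?_
    obtain ⟨v, hv, rfl⟩ := mem_image.mp he
    refine ⟨v, Sym2.mem_mk_left _ _, fun e' he' hve' => ?_⟩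
    obtain ⟨j, rfl⟩ := Sym2.mem_iff_exists.mp hve'
    exact (hbest v hv).2 j (by simpa using hFG he')
  case sum =>
    have hisolated : ∀ v ∈ univ, v ∉ S →
        (G.neighborFinset v).fold max 0 (fun j => f s(v, j)) = 0 := fun v _ hv => by
      have hempty : G.neighborFinset v = ∅ :=
        not_nonempty_iff_eq_empty.mp (by simpa [S] using hv)
      rw [hempty, fold_empty]
    have hchosen : ∀ v ∈ S, (G.neighborFinset v).fold max 0 (fun j => f s(v, j)) = f (c v) :=
      fun v hv => fold_max_eq_of_mem_of_forall_le (hbest v hv).1 (hf _) fun i hi =>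
        Prod.Lex.monotone_fst _ _ ((hbest v hv).2 i hi)
    have hc : ∀ v ∈ S, v ∈ c v ∧ ¬(c v).IsDiag := fun v hv =>
      ⟨Sym2.mem_mk_left _ _, G.not_isDiag_of_mem_edgeSet (hcG v hv)⟩
    rw [← sum_subset (subset_univ S) hisolated, sum_congr rfl hchosen,
      sum_comp_sym2_eq_sum_image_add_sum_filter S c hc, add_comm]
    -- the two filters for `M` differ only in their `Decidable` instances
    convert rfl

end SimpleGraph

/-- For any weighted graph `G` with nonnegative edge weights there are
edge subsets `M, F ⊆ E` such that `M` is a matching (no two distinct edges of `M` share a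
vertex), `F` is a forest (the graph with edge set `F` is acyclic), and
`∑_{v∈V} max_{e∋v} w_e = ∑_{e∈M} w_e + ∑_{e∈F} w_e`. -/
theorem exists_matching_forest_decomposition (n : ℕ) (G : SimpleGraph (Fin n))
    [DecidableRel G.Adj] (w : Fin n → Fin n → ℝ)
    (hsym : ∀ i j, w i j = w j i) (hnn : ∀ i j, 0 ≤ w i j) :
    ∃ M F : Finset (Sym2 (Fin n)),
      ↑M ⊆ G.edgeSet ∧ ↑F ⊆ G.edgeSet ∧
      (∀ e ∈ M, ∀ e' ∈ M, e ≠ e' → ∀ v : Fin n, v ∈ e → v ∉ e') ∧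
      (SimpleGraph.fromEdgeSet (↑F : Set (Sym2 (Fin n)))).IsAcyclic ∧
      ∑ v, maxIncident n G w v =
        (∑ e ∈ M, Sym2.lift ⟨w, fun a b => hsym a b⟩ e) +
          ∑ e ∈ F, Sym2.lift ⟨w, fun a b => hsym a b⟩ e := by
  have hmaxIncident : ∀ v, maxIncident n G w v =
      (G.neighborFinset v).fold max 0 (fun j => Sym2.lift ⟨w, fun a b => hsym a b⟩ s(v, j)) :=
    fun v => by simp [maxIncident, SimpleGraph.neighborFinset_eq_filter]
  simp_rw [hmaxIncident]
  exact G.exists_matching_forest_sum_fold_max_eq _ (Sym2.ind fun a b => hnn a b)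
end
end

section
/- The minimum over the region 0 ≤ x ≤ y ≤ 1 of (1/(2 + y + x)) · max{ 2y, 3x + 1, (4 + x + y)/3 } is at least 0.55. -/
/-!
The bound is attained at `(x, y) = (3/13, 11/13)`, where the three quantities agree. The
convex combination of `2y`, `3x + 1`, `(4 + x + y)/3` with weights `3/20`, `1/10`, `3/4`
(the multipliers of that vertex) is identically `(11/20)(2 + y + x)`, and a maximum dominates
every convex combination of its arguments.
-/

theorem mul_add_mul_add_mul_le_max_max {α : Type*} [Ring α] [LinearOrder α]
    [IsOrderedRing α] {a b c u v w : α} (ha : 0 ≤ a) (hb : 0 ≤ b) (hc : 0 ≤ c)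
    (habc : a + b + c = 1) : a * u + b * v + c * w ≤ max (max u v) w := by
  set m := max (max u v) w
  have hu : u ≤ m := (le_max_left u v).trans (le_max_left _ w)
  have hv : v ≤ m := (le_max_right u v).trans (le_max_left _ w)
  have hw : w ≤ m := le_max_right _ w
  calc a * u + b * v + c * w ≤ a * m + b * m + c * m := by gcongr
    _ = m := by rw [← add_mul, ← add_mul, habc, one_mul]

/-- For all `(x, y)` with `0 ≤ x ≤ y ≤ 1`,
`(1/(2+y+x)) · max{2y, 3x+1, (4+x+y)/3} ≥ 0.55`; that is, the minimum of this quantity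
over the region is at least `0.55`. -/
theorem min_two_var_ratio_ge :
    ∀ x y : ℝ, 0 ≤ x → x ≤ y → y ≤ 1 →
      0.55 ≤ (1 / (2 + y + x)) * max (max (2 * y) (3 * x + 1)) ((4 + x + y) / 3) := by
  intro x y hx hxy _
  have hpos : 0 < 2 + y + x := by linarith
  have hcomb : 0.55 * (2 + y + x)
      = 3 / 20 * (2 * y) + 1 / 10 * (3 * x + 1) + 3 / 4 * ((4 + x + y) / 3) := by
    norm_num
    ring
  rw [one_div, inv_mul_eq_div, le_div_iff₀ hpos, hcomb]
  exact mul_add_mul_add_mul_le_max_max (by norm_num) (by norm_num) (by norm_num) (by norm_num)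
end
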